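/- Let (E, F_1,…,F_m, k, ρ_1,…,ρ_m) be a Construction-1 configuration, and write η_i = |F_i| − ρ_i and F_I = ⋃_{i∈I} F_i. Then there exists a matroid M on ground set E such that: (i) for every I ⊆ {1,…,m}, r_M(F_I) = min{|F_I| − Σ_{i∈I} η_i, k}; (ii) r_M(E) = k; and (iii) the cyclic flats of M (sets that are simultaneously flats of M and unions of circuits of M) are exactly the sets in {F_I : I ⊆ {1,…,m}, |F_I| − Σ_{i∈I} η_i < k} ∪ {E}. -/

import Mathlib

open scoped BigOperators

attribute [local instance] Classical.propDecidable

/-- A matroid on a finite ground set `E`, given by its rank function on `Finset`s,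
satisfying the rank axioms: boundedness by cardinality, monotonicity and
submodularity (for subsets of the ground set). -/
structure FinMatroid (α : Type) where
  /-- the ground set -/
  E : Finset α
  /-- the rank function -/
  rk : Finset α → ℕ
  rk_le_card : ∀ X, X ⊆ E → rk X ≤ X.card
  rk_mono : ∀ X Y, X ⊆ Y → Y ⊆ E → rk X ≤ rk Y
  rk_submodular : ∀ X Y, X ⊆ E → Y ⊆ E → rk (X ∪ Y) + rk (X ∩ Y) ≤ rk X + rk Y

namespace FinMatroid

variable {α : Type} [DecidableEq α] (M : FinMatroid α)

/-- A circuit: a minimal dependent subset of the ground set. -/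
def IsCircuit (C : Finset α) : Prop :=
  C ⊆ M.E ∧ M.rk C < C.card ∧ ∀ X, X ⊂ C → M.rk X = X.card

/-- A cyclic set: a union of circuits, i.e. every element lies in a circuit
contained in the set. -/
def IsCyclic (X : Finset α) : Prop :=
  X ⊆ M.E ∧ ∀ x ∈ X, ∃ C, C ⊆ X ∧ M.IsCircuit C ∧ x ∈ C

/-- The closure of a set: all ground set elements whose insertion does not
increase the rank. -/
def closure (X : Finset α) : Finset α :=
  M.E.filter (fun y => M.rk (insert y X) = M.rk X)

/-- A flat: a subset of the ground set equal to its closure. -/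
def IsFlat (X : Finset α) : Prop :=
  X ⊆ M.E ∧ M.closure X = X

/-- A cyclic flat: a flat that is also a union of circuits. -/
def IsCyclicFlat (X : Finset α) : Prop :=
  M.IsFlat X ∧ M.IsCyclic X

end FinMatroid

open scoped BigOperators

/-- A Construction-1 configuration: a finite set `E ⊆ ℕ` covered by nonempty subsets
`F 0, …, F (m-1)`, a positive integer `k`, and ranks `ρ i` with `0 < ρ i < |F i|`,
such that `k ≤ |E| - ∑ η i` (where `η i = |F i| - ρ i`) and
`|F_{[m] \ {j}} ∩ F j| < ρ j` for all `j`. -/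
structure Constr1Config where
  /-- the number of subsets -/
  m : ℕ
  hm : 0 < m
  /-- the subsets `F i` -/
  F : Fin m → Finset ℕ
  /-- the dimension -/
  k : ℕ
  hk : 0 < k
  /-- the ranks of the subsets -/
  ρ : Fin m → ℕ
  hρpos : ∀ i, 0 < ρ i
  hρlt : ∀ i, ρ i < (F i).card
  hdim : (k : ℤ) ≤ ((Finset.univ.biUnion F).card : ℤ) - ∑ i, (((F i).card : ℤ) - (ρ i : ℤ))
  hint : ∀ j, (((Finset.univ.erase j).biUnion F) ∩ F j).card < ρ j

namespace Constr1Config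

variable (c : Constr1Config)

/-- The ground set `E = F_[m]`. -/
def E : Finset ℕ := Finset.univ.biUnion c.F

/-- The parameter `n = |E|`. -/
def n : ℕ := c.E.card

/-- The nullity `η i = |F i| - ρ i`. -/
def η (i : Fin c.m) : ℕ := (c.F i).card - c.ρ i

/-- The parameter `r = max_i ρ i`. -/
def r : ℕ := Finset.univ.sup c.ρ

/-- The parameter `δ = 1 + min_i η i`. -/
def δ : ℕ :=
  1 + Finset.univ.inf' ⟨⟨0, c.hm⟩, Finset.mem_univ _⟩ c.η

/-- The minimum-distance parameter
`d = n - k + 1 - max{∑_{i ∈ I} η i : |F_I| - ∑_{i ∈ I} η i < k}`. -/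
def d : ℤ :=
  (c.n : ℤ) - (c.k : ℤ) + 1 -
    (((Finset.univ.powerset.filter
        (fun I : Finset (Fin c.m) =>
          ((I.biUnion c.F).card : ℤ) - ∑ i ∈ I, (c.η i : ℤ) < (c.k : ℤ))).sup
        (fun I => ∑ i ∈ I, c.η i) : ℕ) : ℤ)

end Constr1Config

/-!
The matroid has rank function `r X = min (k, min_I (|X ∪ F_I| - ∑_{i ∈ I} η i))`. The bounds
`(X, I) ↦ |X ∪ F_I| - ∑_{i ∈ I} η i` combine submodularly under `(∪, ∩)` in both
arguments, which makes `r` submodular. Condition (iv) makes `I ↦ |F_I| - ∑_{i ∈ I} η i`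
strictly increasing; this gives the rank of `F_I`, shows that no `F_I` has a coloop, and
that `F_I` is closed whenever its rank is below `k`. Conversely, a cyclic flat of rank
below `k` equals `F_J` for any `J` attaining the minimum in its rank.
-/

open Finset

namespace FinMatroid

variable {α : Type} (M : FinMatroid α) {C X Y Z : Finset α} {x : α}

theorem exists_isCircuit_subset (hX : X ⊆ M.E) (hdep : M.rk X < X.card) :
    ∃ C ⊆ X, M.IsCircuit C := by
  obtain ⟨C, hC, hmin⟩ := exists_min_image (X.powerset.filter fun C => M.rk C < C.card) card
    ⟨X, mem_filter.2 ⟨mem_powerset_self X, hdep⟩⟩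
  rw [mem_filter, mem_powerset] at hC
  refine ⟨C, hC.1, hC.1.trans hX, hC.2, fun Y hY => ?_⟩
  refine le_antisymm (M.rk_le_card Y (hY.subset.trans (hC.1.trans hX)))
    (not_lt.1 fun hYdep => ?_)
  have := hmin Y (mem_filter.2 ⟨mem_powerset.2 (hY.subset.trans hC.1), hYdep⟩)
  exact absurd (card_lt_card hY) (not_lt.2 this)

theorem IsCircuit.nonempty {M : FinMatroid α} (hC : M.IsCircuit C) : C.Nonempty := by
  rw [nonempty_iff_ne_empty]
  rintro rfl
  exact absurd hC.2.1 (by simp)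

variable [DecidableEq α]

theorem rk_union_add_rk_inter_le (hX : X ⊆ M.E) (hY : Y ⊆ M.E) :
    M.rk (X ∪ Y) + M.rk (X ∩ Y) ≤ M.rk X + M.rk Y := by
  convert M.rk_submodular X Y hX hY

theorem IsCircuit.rk_erase_eq {M : FinMatroid α} (hC : M.IsCircuit C) (hx : x ∈ C) :
    M.rk (C.erase x) = M.rk C := by
  obtain ⟨hCE, hdep, hindep⟩ := hC
  have h₁ := hindep _ (erase_ssubset hx)
  have h₂ := M.rk_mono _ _ (erase_subset x C) hCE
  have h₃ := card_erase_add_one hx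
  omega

theorem rk_erase_eq_of_mem_isCircuit (hC : M.IsCircuit C) (hCZ : C ⊆ Z) (hZ : Z ⊆ M.E)
    (hx : x ∈ C) : M.rk (Z.erase x) = M.rk Z := by
  have hsub := M.rk_union_add_rk_inter_le ((erase_subset x Z).trans hZ) (hCZ.trans hZ)
  rw [show Z.erase x ∪ C = Z by grind, show Z.erase x ∩ C = C.erase x by grind,
    hC.rk_erase_eq hx] at hsub
  have := M.rk_mono _ _ (erase_subset x Z) hZ
  omega

theorem exists_isCircuit_of_rk_erase_eq (hZ : Z ⊆ M.E) (hx : x ∈ Z)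
    (h : M.rk (Z.erase x) = M.rk Z) : ∃ C ⊆ Z, M.IsCircuit C ∧ x ∈ C := by
  obtain ⟨C, hC, hmin⟩ := exists_min_image
    (Z.powerset.filter fun C => x ∈ C ∧ M.rk (C.erase x) = M.rk C) card
    ⟨Z, mem_filter.2 ⟨mem_powerset_self Z, hx, h⟩⟩
  simp only [mem_filter, mem_powerset, and_imp] at hC hmin
  obtain ⟨hCZ, hxC, hCx⟩ := hC
  have hCE := hCZ.trans hZ
  have hdep : M.rk C < C.card := by
    have := M.rk_le_card _ ((erase_subset x C).trans hCE)
    have := card_erase_add_one hxC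
    omega
  obtain ⟨D, hDC, hD⟩ := M.exists_isCircuit_subset hCE hdep
  by_cases hxD : x ∈ D
  · obtain rfl : D = C :=
      eq_of_subset_of_card_le hDC (hmin D (hDC.trans hCZ) hxD (hD.rk_erase_eq hxD))
    exact ⟨D, hCZ, hD, hxC⟩
  -- otherwise any `y ∈ D` could be deleted from `C`, against the minimality of `C`
  obtain ⟨y, hyD⟩ := hD.nonempty
  have hyx : y ≠ x := fun h => hxD (h ▸ hyD)
  have hCy := M.rk_erase_eq_of_mem_isCircuit hD hDC hCE hyD
  have hCxy := M.rk_erase_eq_of_mem_isCircuit hD (subset_erase.2 ⟨hDC, hxD⟩)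
    ((erase_subset x C).trans hCE) hyD
  have := hmin (C.erase y) ((erase_subset y C).trans hCZ) (mem_erase.2 ⟨hyx.symm, hxC⟩)
    (by rw [erase_right_comm, hCxy, hCx, hCy])
  have := card_erase_lt_of_mem (hDC hyD)
  omega

theorem isCyclic_iff : M.IsCyclic Z ↔ Z ⊆ M.E ∧ ∀ x ∈ Z, M.rk (Z.erase x) = M.rk Z := by
  refine ⟨fun ⟨hZ, hcirc⟩ => ⟨hZ, fun x hx => ?_⟩, fun ⟨hZ, hcoloop⟩ =>
    ⟨hZ, fun x hx => M.exists_isCircuit_of_rk_erase_eq hZ hx (hcoloop x hx)⟩⟩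
  obtain ⟨C, hCZ, hC, hxC⟩ := hcirc x hx
  exact M.rk_erase_eq_of_mem_isCircuit hC hCZ hZ hxC

theorem isFlat_iff :
    M.IsFlat Z ↔ Z ⊆ M.E ∧ ∀ y ∈ M.E, M.rk (insert y Z) = M.rk Z → y ∈ Z := by
  refine ⟨fun ⟨hZ, hcl⟩ => ⟨hZ, fun y hy hyZ => ?_⟩, fun ⟨hZ, hcl⟩ => ⟨hZ, ?_⟩⟩
  · rw [← hcl]
    exact mem_filter.2 ⟨hy, hyZ⟩
  · ext y
    refine ⟨fun hy => hcl y (mem_filter.1 hy).1 (mem_filter.1 hy).2, fun hy => ?_⟩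
    exact mem_filter.2 ⟨hZ hy, by rw [insert_eq_of_mem hy]⟩

theorem isFlat_ground : M.IsFlat M.E :=
  (M.isFlat_iff).2 ⟨Subset.rfl, fun _ hy _ => hy⟩

theorem IsFlat.eq_ground_of_rk_ground_le {M : FinMatroid α} (hZ : M.IsFlat Z)
    (h : M.rk M.E ≤ M.rk Z) : Z = M.E := by
  obtain ⟨hZE, hcl⟩ := (M.isFlat_iff).1 hZ
  refine Subset.antisymm hZE fun y hy => hcl y hy (le_antisymm ?_ ?_)
  · exact (M.rk_mono _ _ (insert_subset hy hZE) Subset.rfl).trans h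
  · exact M.rk_mono _ _ (subset_insert y Z) (insert_subset hy hZE)

end FinMatroid

namespace Constr1Config

variable (c : Constr1Config) {I J : Finset (Fin c.m)} {X Y Z : Finset ℕ} {x : ℕ}

def nullity (I : Finset (Fin c.m)) : ℤ := ∑ i ∈ I, (c.η i : ℤ)

def uncappedRank (I : Finset (Fin c.m)) : ℤ := ((I.biUnion c.F).card : ℤ) - c.nullity I

def rankBound (X : Finset ℕ) (I : Finset (Fin c.m)) : ℤ :=
  ((X ∪ I.biUnion c.F).card : ℤ) - c.nullity I

def rank (X : Finset ℕ) : ℤ := min (c.k : ℤ) (univ.inf' univ_nonempty (c.rankBound X))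

theorem one_le_eta (i : Fin c.m) : 1 ≤ c.η i := by
  have := c.hρlt i
  have := c.hρpos i
  unfold η
  omega

theorem nullity_nonneg (I : Finset (Fin c.m)) : 0 ≤ c.nullity I :=
  sum_nonneg fun _ _ => Int.natCast_nonneg _

theorem biUnion_subset_E (I : Finset (Fin c.m)) : I.biUnion c.F ⊆ c.E :=
  biUnion_subset_biUnion_of_subset_left c.F (subset_univ I)

theorem uncappedRank_add_one_le_insert {j : Fin c.m} (hj : j ∉ J) :
    c.uncappedRank J + 1 ≤ c.uncappedRank (insert j J) := by
  have hcap : (c.F j ∩ J.biUnion c.F).card < c.ρ j := by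
    refine lt_of_le_of_lt (card_le_card fun x hx => ?_) (c.hint j)
    obtain ⟨hxj, hxJ⟩ := mem_inter.1 hx
    refine mem_inter.2 ⟨biUnion_subset_biUnion_of_subset_left c.F (fun i hi => ?_) hxJ, hxj⟩
    exact mem_erase.2 ⟨fun h => hj (h ▸ hi), mem_univ i⟩
  have hcard := card_union_add_card_inter (c.F j) (J.biUnion c.F)
  have hη : c.η j + c.ρ j = (c.F j).card := Nat.sub_add_cancel (c.hρlt j).le
  unfold uncappedRank nullity
  rw [biUnion_insert, sum_insert hj]
  omega

theorem uncappedRank_mono (h : J ⊆ I) : c.uncappedRank J ≤ c.uncappedRank I := by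
  rw [← union_sdiff_of_subset h]
  induction I \ J using Finset.induction_on with
  | empty => simp
  | insert a K _ ih =>
    rw [union_insert]
    by_cases ha : a ∈ J ∪ K
    · rwa [insert_eq_of_mem ha]
    · linarith [c.uncappedRank_add_one_le_insert ha]

theorem uncappedRank_nonneg (I : Finset (Fin c.m)) : 0 ≤ c.uncappedRank I := by
  simpa [uncappedRank, nullity] using c.uncappedRank_mono (empty_subset I)

theorem rankBound_union_add_rankBound_inter_le (X Y : Finset ℕ) (I J : Finset (Fin c.m)) :
    c.rankBound (X ∪ Y) (I ∪ J) + c.rankBound (X ∩ Y) (I ∩ J) ≤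
      c.rankBound X I + c.rankBound Y J := by
  have hunion :
      X ∪ Y ∪ (I ∪ J).biUnion c.F = (X ∪ I.biUnion c.F) ∪ (Y ∪ J.biUnion c.F) := by
    rw [union_biUnion]
    ac_rfl
  have hinter :
      X ∩ Y ∪ (I ∩ J).biUnion c.F ⊆ (X ∪ I.biUnion c.F) ∩ (Y ∪ J.biUnion c.F) := by
    intro a
    simp only [mem_union, mem_inter, mem_biUnion]
    grind
  have hcard := card_union_add_card_inter (X ∪ I.biUnion c.F) (Y ∪ J.biUnion c.F)
  have hle := card_le_card hinter
  have hnull : c.nullity (I ∪ J) + c.nullity (I ∩ J) = c.nullity I + c.nullity J :=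
    sum_union_inter
  unfold rankBound
  rw [hunion]
  omega

theorem uncappedRank_le_rankBound (X : Finset ℕ) (I : Finset (Fin c.m)) :
    c.uncappedRank I ≤ c.rankBound X I := by
  have := card_le_card (subset_union_right (s₁ := X) (s₂ := I.biUnion c.F))
  unfold uncappedRank rankBound
  omega

theorem rankBound_mono (h : X ⊆ Y) (I : Finset (Fin c.m)) :
    c.rankBound X I ≤ c.rankBound Y I := by
  have := card_le_card (union_subset_union_left (t := I.biUnion c.F) h)
  unfold rankBound
  omega

theorem rankBound_empty (X : Finset ℕ) : c.rankBound X ∅ = X.card := by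
  simp [rankBound, nullity]

theorem rankBound_biUnion (I J : Finset (Fin c.m)) :
    c.rankBound (I.biUnion c.F) J = c.uncappedRank (I ∪ J) + c.nullity (I \ J) := by
  have hnull : c.nullity (I \ J) + c.nullity J = c.nullity (I ∪ J) := by
    rw [← union_sdiff_right]
    exact sum_sdiff subset_union_right
  unfold rankBound uncappedRank
  rw [union_biUnion]
  omega

theorem rankBound_insert_of_mem (hx : x ∈ J.biUnion c.F) :
    c.rankBound (insert x X) J = c.rankBound X J := by
  rw [rankBound, rankBound, insert_union, insert_eq_of_mem (mem_union_right X hx)]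

theorem rankBound_insert_of_notMem (hx : x ∉ X ∪ J.biUnion c.F) :
    c.rankBound (insert x X) J = c.rankBound X J + 1 := by
  rw [rankBound, rankBound, insert_union, card_insert_of_notMem hx]
  push_cast
  ring

theorem le_rank_iff {a : ℤ} : a ≤ c.rank X ↔ a ≤ c.k ∧ ∀ J, a ≤ c.rankBound X J := by
  simp [rank, le_inf'_iff]

theorem rank_le_k (X : Finset ℕ) : c.rank X ≤ c.k := min_le_left _ _

theorem rank_le_rankBound (X : Finset ℕ) (J : Finset (Fin c.m)) : c.rank X ≤ c.rankBound X J :=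
  (min_le_right _ _).trans (inf'_le _ (mem_univ J))

theorem rank_eq_k_or_exists_rank_eq_rankBound (X : Finset ℕ) :
    c.rank X = c.k ∨ ∃ J, c.rank X = c.rankBound X J := by
  obtain ⟨J, -, hJ⟩ := exists_mem_eq_inf' univ_nonempty (c.rankBound X)
  rcases min_choice (c.k : ℤ) (univ.inf' univ_nonempty (c.rankBound X)) with h | h
  · exact Or.inl h
  · exact Or.inr ⟨J, h.trans hJ⟩

theorem exists_rank_eq_rankBound (h : c.rank X < c.k) : ∃ J, c.rank X = c.rankBound X J :=
  (c.rank_eq_k_or_exists_rank_eq_rankBound X).resolve_left h.ne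

theorem rank_nonneg (X : Finset ℕ) : 0 ≤ c.rank X :=
  (c.le_rank_iff).2 ⟨Int.natCast_nonneg _,
    fun J => (c.uncappedRank_nonneg J).trans (c.uncappedRank_le_rankBound X J)⟩

theorem rank_le_card (X : Finset ℕ) : c.rank X ≤ X.card :=
  c.rankBound_empty X ▸ c.rank_le_rankBound X ∅

theorem rank_mono (h : X ⊆ Y) : c.rank X ≤ c.rank Y :=
  (c.le_rank_iff).2
    ⟨c.rank_le_k X, fun J => (c.rank_le_rankBound X J).trans (c.rankBound_mono h J)⟩

theorem rank_submodular (X Y : Finset ℕ) :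
    c.rank (X ∪ Y) + c.rank (X ∩ Y) ≤ c.rank X + c.rank Y := by
  have hunion := c.rank_le_k (X ∪ Y)
  rcases c.rank_eq_k_or_exists_rank_eq_rankBound X with hX | ⟨I, hX⟩ <;>
    rcases c.rank_eq_k_or_exists_rank_eq_rankBound Y with hY | ⟨J, hY⟩
  · linarith [c.rank_le_k (X ∩ Y)]
  · linarith [c.rank_mono (inter_subset_right (s₁ := X) (s₂ := Y))]
  · linarith [c.rank_mono (inter_subset_left (s₁ := X) (s₂ := Y))]
  · linarith [c.rank_le_rankBound (X ∪ Y) (I ∪ J), c.rank_le_rankBound (X ∩ Y) (I ∩ J),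
      c.rankBound_union_add_rankBound_inter_le X Y I J]

theorem rank_biUnion (I : Finset (Fin c.m)) :
    c.rank (I.biUnion c.F) = min (c.uncappedRank I) c.k := by
  refine le_antisymm (le_min ?_ (c.rank_le_k _))
    ((c.le_rank_iff).2 ⟨min_le_right _ _, fun J => ?_⟩)
  · simpa [rankBound_biUnion, nullity] using c.rank_le_rankBound (I.biUnion c.F) I
  · rw [rankBound_biUnion]
    linarith [min_le_left (c.uncappedRank I) c.k,
      c.uncappedRank_mono (subset_union_left (s₁ := I) (s₂ := J)), c.nullity_nonneg (I \ J)]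

theorem rank_ground : c.rank c.E = c.k := by
  have hdim : (c.k : ℤ) ≤ c.uncappedRank univ := by
    simpa only [uncappedRank, nullity, η, E, ← Nat.cast_sub (c.hρlt _).le] using c.hdim
  rw [E, rank_biUnion, min_eq_right hdim]

theorem rank_biUnion_erase (hx : x ∈ I.biUnion c.F) :
    c.rank ((I.biUnion c.F).erase x) = c.rank (I.biUnion c.F) := by
  refine le_antisymm (c.rank_mono (erase_subset x _)) ?_
  rw [rank_biUnion, le_rank_iff]
  refine ⟨min_le_right _ _, fun J => (min_le_left _ _).trans ?_⟩
  have hmono := c.uncappedRank_mono (subset_union_left (s₁ := I) (s₂ := J))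
  have hbound := c.rankBound_biUnion I J
  rw [← insert_erase hx] at hbound
  by_cases hxJ : x ∈ J.biUnion c.F
  · rw [c.rankBound_insert_of_mem hxJ] at hbound
    linarith [c.nullity_nonneg (I \ J)]
  · rw [c.rankBound_insert_of_notMem (by simp [hxJ])] at hbound
    obtain ⟨i, hiI, hxi⟩ := mem_biUnion.1 hx
    have hiJ : i ∉ J := fun hiJ => hxJ (mem_biUnion.2 ⟨i, hiJ, hxi⟩)
    have hi : (c.η i : ℤ) ≤ c.nullity (I \ J) :=
      single_le_sum (fun _ _ => Int.natCast_nonneg _) (mem_sdiff.2 ⟨hiI, hiJ⟩)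
    linarith [c.one_le_eta i]

theorem rank_biUnion_lt_rank_insert (hI : c.uncappedRank I < c.k) {y : ℕ}
    (hy : y ∉ I.biUnion c.F) : c.rank (I.biUnion c.F) < c.rank (insert y (I.biUnion c.F)) := by
  rw [rank_biUnion, min_eq_left hI.le, Int.lt_iff_add_one_le, le_rank_iff]
  refine ⟨hI, fun J => ?_⟩
  have hbound := c.rankBound_biUnion I J
  have hnull := c.nullity_nonneg (I \ J)
  by_cases hyJ : y ∈ J.biUnion c.F
  · obtain ⟨j, hjJ, hyj⟩ := mem_biUnion.1 hyJ
    have hjI : j ∉ I := fun hjI => hy (mem_biUnion.2 ⟨j, hjI, hyj⟩)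
    have := c.uncappedRank_mono (insert_subset (mem_union_right I hjJ) subset_union_left)
    rw [c.rankBound_insert_of_mem hyJ]
    linarith [c.uncappedRank_add_one_le_insert hjI]
  · rw [c.rankBound_insert_of_notMem (by simp [hy, hyJ])]
    linarith [c.uncappedRank_mono (subset_union_left (s₁ := I) (s₂ := J))]


def matroid : FinMatroid ℕ where
  E := c.E
  rk X := (c.rank X).toNat
  rk_le_card X _ := by have := c.rank_le_card X; omega
  rk_mono _ _ h _ := Int.toNat_le_toNat (c.rank_mono h)
  rk_submodular X Y _ _ := by
    have key : (c.rank (X ∪ Y)).toNat + (c.rank (X ∩ Y)).toNat ≤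
        (c.rank X).toNat + (c.rank Y).toNat := by
      have := c.rank_submodular X Y
      have := c.rank_nonneg (X ∪ Y)
      have := c.rank_nonneg (X ∩ Y)
      omega
    convert key

theorem matroid_E : c.matroid.E = c.E := rfl

theorem matroid_rk (X : Finset ℕ) : (c.matroid.rk X : ℤ) = c.rank X :=
  Int.toNat_of_nonneg (c.rank_nonneg X)

theorem matroid_rk_eq_iff {X Y : Finset ℕ} :
    c.matroid.rk X = c.matroid.rk Y ↔ c.rank X = c.rank Y := by
  rw [← Nat.cast_inj (R := ℤ), matroid_rk, matroid_rk]

theorem isCyclic_biUnion (I : Finset (Fin c.m)) : c.matroid.IsCyclic (I.biUnion c.F) :=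
  (c.matroid.isCyclic_iff).2 ⟨c.biUnion_subset_E I,
    fun _ hx => (c.matroid_rk_eq_iff).2 (c.rank_biUnion_erase hx)⟩

theorem isFlat_biUnion {I : Finset (Fin c.m)} (hI : c.uncappedRank I < c.k) :
    c.matroid.IsFlat (I.biUnion c.F) := by
  refine (c.matroid.isFlat_iff).2 ⟨c.biUnion_subset_E I, fun y _ hy => ?_⟩
  by_contra hyI
  exact (c.rank_biUnion_lt_rank_insert hI hyI).ne' ((c.matroid_rk_eq_iff).1 hy)

/-- Any `J` attaining the minimum in `rank Z` gives `Z = F_J`: flatness forces `F_J ⊆ Z`, and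
an element of `Z \ F_J` would be a coloop of `Z`. -/
theorem exists_eq_biUnion_of_isCyclicFlat (hZ : c.matroid.IsCyclicFlat Z) (hk : c.rank Z < c.k) :
    ∃ J, c.uncappedRank J < c.k ∧ Z = J.biUnion c.F := by
  obtain ⟨J, hJ⟩ := c.exists_rank_eq_rankBound hk
  obtain ⟨-, hcl⟩ := (c.matroid.isFlat_iff).1 hZ.1
  obtain ⟨-, hcoloop⟩ := (c.matroid.isCyclic_iff).1 hZ.2
  have hFJ : J.biUnion c.F ⊆ Z := fun y hy => hcl y (c.biUnion_subset_E J hy) <|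
    (c.matroid_rk_eq_iff).2 <| le_antisymm
      (hJ ▸ c.rankBound_insert_of_mem hy ▸ c.rank_le_rankBound _ J)
      (c.rank_mono (subset_insert y Z))
  have hZF : Z ⊆ J.biUnion c.F := fun x hx => by
    by_contra hxJ
    have hbound := c.rankBound_insert_of_notMem (x := x) (X := Z.erase x) (J := J) (by simp [hxJ])
    rw [insert_erase hx] at hbound
    linarith [c.rank_le_rankBound (Z.erase x) J, (c.matroid_rk_eq_iff).1 (hcoloop x hx)]
  obtain rfl := Subset.antisymm hZF hFJ
  refine ⟨J, ?_, rfl⟩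
  simpa [rankBound_biUnion, nullity, hJ] using hk

theorem isCyclicFlat_iff : c.matroid.IsCyclicFlat Z ↔
    Z = c.E ∨ ∃ I, c.uncappedRank I < c.k ∧ Z = I.biUnion c.F := by
  refine ⟨fun hZ => ?_, ?_⟩
  · by_cases hk : c.rank Z < c.k
    · exact Or.inr (c.exists_eq_biUnion_of_isCyclicFlat hZ hk)
    · refine Or.inl (hZ.1.eq_ground_of_rk_ground_le ?_)
      rw [← Nat.cast_le (α := ℤ), matroid_rk, matroid_rk, matroid_E, rank_ground]
      exact not_lt.1 hk
  · rintro (rfl | ⟨I, hI, rfl⟩)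
    · exact ⟨c.matroid.isFlat_ground, c.isCyclic_biUnion univ⟩
    · exact ⟨c.isFlat_biUnion hI, c.isCyclic_biUnion I⟩

end Constr1Config

/-- Every Construction-1 configuration yields a matroid on its ground set `E` whose
rank on each union `F_I` is `min{|F_I| - ∑_{i∈I} η i, k}`, whose rank is `k`, and
whose cyclic flats are exactly the sets `F_I` with `|F_I| - ∑_{i∈I} η i < k`,
together with `E`. -/
theorem constr1_yields_matroid (c : Constr1Config) :
    ∃ M : FinMatroid ℕ, M.E = c.E ∧
      (∀ I : Finset (Fin c.m),
        (M.rk (I.biUnion c.F) : ℤ) =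
          min (((I.biUnion c.F).card : ℤ) - ∑ i ∈ I, (c.η i : ℤ)) (c.k : ℤ)) ∧
      M.rk c.E = c.k ∧
      (∀ Z : Finset ℕ, M.IsCyclicFlat Z ↔
        (Z = c.E ∨ ∃ I : Finset (Fin c.m),
          ((I.biUnion c.F).card : ℤ) - ∑ i ∈ I, (c.η i : ℤ) < (c.k : ℤ) ∧
          Z = I.biUnion c.F)) := by
  refine ⟨c.matroid, rfl, fun I => ?_, ?_, fun Z => c.isCyclicFlat_iff⟩
  · rw [c.matroid_rk, c.rank_biUnion]
    rfl
  · exact_mod_cast (c.matroid_rk c.E).trans c.rank_ground
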